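/- (Propagation of the 𝒴¹ bound for mild Navier–Stokes solutions.) Let u₀ ∈ L²(ℝ³; ℝ³) with ‖u₀‖_{𝒴¹} := sup_{ξ} |ξ| |û₀(ξ)| < ∞, and let u : [0,∞) → L²(ℝ³; ℝ³) satisfy ‖u(τ)‖_{L²} ≤ ‖u₀‖_{L²} for all τ ≥ 0 and the Duhamel identity in Fourier variables: û(t,ξ) = e^{−t|ξ|²} û₀(ξ) − ∫₀^t e^{−(t−τ)|ξ|²} m(ξ) ( iξ · F[u⊗u](τ,ξ) ) dτ for all t ≥ 0 and a.e. ξ ∈ ℝ³. Then sup_{t ≥ 0} ‖u(t)‖_{𝒴¹} ≤ ‖u₀‖_{𝒴¹} + ‖u₀‖²_{L²}. -/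

import Mathlib

open MeasureTheory Real
open scoped FourierTransform

noncomputable section

/-- Componentwise Fourier transform of a vector field `g : ℝ³ → ℝ³`,
viewed as a `ℂ³`-valued function of the frequency `ξ`. -/
def ftv (g : EuclideanSpace ℝ (Fin 3) → EuclideanSpace ℝ (Fin 3))
    (ξ : EuclideanSpace ℝ (Fin 3)) : EuclideanSpace ℂ (Fin 3) :=
  (EuclideanSpace.equiv (Fin 3) ℂ).symm fun i => 𝓕 (fun x => ((g x i : ℝ) : ℂ)) ξ

/-- The Leray projection multiplier `m(ξ)` applied to a vector `w ∈ ℂ³`: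
`(m(ξ)w)_i = w_i - ξ_i (ξ·w)/|ξ|²` (for `ξ ≠ 0`). -/
def lerayM (ξ : EuclideanSpace ℝ (Fin 3)) (w : Fin 3 → ℂ) : Fin 3 → ℂ :=
  fun i => w i - ((ξ i : ℂ) * ∑ j, (ξ j : ℂ) * w j) / ((‖ξ‖ : ℂ) ^ 2)

/-- The vector `iξ · F[u⊗u](τ,ξ)`, with `k`-th component
`∑_j iξ_j 𝓕(u_j u_k)(ξ)`. -/
def nonlinNS (u : ℝ → EuclideanSpace ℝ (Fin 3) → EuclideanSpace ℝ (Fin 3))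
    (τ : ℝ) (ξ : EuclideanSpace ℝ (Fin 3)) : Fin 3 → ℂ :=
  fun k => ∑ j, Complex.I * (ξ j : ℂ) *
    𝓕 (fun x => ((u τ x j : ℝ) : ℂ) * ((u τ x k : ℝ) : ℂ)) ξ

/-!
Fix `t` and a frequency `ξ` and take norms in the Duhamel formula. The heat factor has modulus
at most one, the Leray multiplier is the projection onto `ξ^⊥`, and
`|𝓕(u_j u_k)(ξ)| ≤ ‖u_j‖₂ ‖u_k‖₂` gives `|iξ · 𝓕[u ⊗ u](τ, ξ)| ≤ |ξ| ‖u(τ)‖₂² ≤ |ξ| ‖u₀‖₂²`;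
since `|ξ|² ∫₀ᵗ e^{-(t-τ)|ξ|²} dτ ≤ 1`, the Duhamel term is at most `‖u₀‖₂² / |ξ|`.
The formula only holds for almost every `ξ`, but Fourier transforms are continuous, so the
bound holds for every `ξ`.
-/

open Set

theorem le_of_ae_le_of_continuous {X Y : Type*} [TopologicalSpace X] [MeasurableSpace X]
    {μ : Measure X} [μ.IsOpenPosMeasure] [TopologicalSpace Y] [PartialOrder Y]
    [OrderClosedTopology Y] {f g : X → Y} (hf : Continuous f) (hg : Continuous g)
    (h : ∀ᵐ x ∂μ, f x ≤ g x) (x : X) : f x ≤ g x := by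
  have hclosure : closure {x | f x ≤ g x} = univ := (Measure.dense_of_ae h).closure_eq
  rw [(isClosed_le hf hg).closure_eq] at hclosure
  exact eq_univ_iff_forall.1 hclosure x

theorem integral_abs_mul_le_sqrt_mul_sqrt {α : Type*} [MeasurableSpace α] {μ : Measure α}
    {f g : α → ℝ} (hf : MemLp f 2 μ) (hg : MemLp g 2 μ) :
    ∫ a, |f a| * |g a| ∂μ ≤ √(∫ a, f a ^ 2 ∂μ) * √(∫ a, g a ^ 2 ∂μ) := by
  have h := integral_mul_norm_le_Lp_mul_Lq (μ := μ) Real.HolderConjugate.two_two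
    (by simpa using hf) (by simpa using hg)
  simpa only [Real.rpow_two, Real.norm_eq_abs, sq_abs, Real.sqrt_eq_rpow] using h

theorem norm_toLp_integral_le {X 𝕜 ι : Type*} [MeasurableSpace X] {μ : Measure X} [RCLike 𝕜]
    [Fintype ι] {f : X → ι → 𝕜} {g : X → ℝ} (hg : Integrable g μ)
    (hfg : ∀ᵐ x ∂μ, ‖WithLp.toLp 2 (f x)‖ ≤ g x) :
    ‖WithLp.toLp 2 (fun i => ∫ x, f x i ∂μ)‖ ≤ ∫ x, g x ∂μ := by
  classical
  -- Zeroing the non-integrable components changes no component integral but makes the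
  -- vector-valued integrand integrable.
  let F : X → EuclideanSpace 𝕜 ι := fun x =>
    WithLp.toLp 2 (fun i => if Integrable (f · i) μ then f x i else 0)
  have hF : ∫ x, F x ∂μ = WithLp.toLp 2 (fun i => ∫ x, f x i ∂μ) := by
    ext i
    rw [eval_integral_piLp fun j => by by_cases hj : Integrable (f · j) μ <;> simp [F, hj]]
    by_cases hi : Integrable (f · i) μ <;> simp [F, hi, integral_undef]
  rw [← hF]
  refine norm_integral_le_of_norm_le hg ?_
  filter_upwards [hfg] with x hx
  refine le_trans ?_ hx
  simp only [EuclideanSpace.norm_eq]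
  gcongr with i
  by_cases hi : Integrable (f · i) μ <;> simp [F, hi]

theorem mul_integral_exp_neg_sub_mul (t c : ℝ) :
    c * ∫ τ in (0:ℝ)..t, rexp (-((t - τ) * c)) = 1 - rexp (-(t * c)) := by
  have hderiv : ∀ τ : ℝ, HasDerivAt (fun σ => rexp (-((t - σ) * c)))
      (c * rexp (-((t - τ) * c))) τ := by
    intro τ
    have := ((hasDerivAt_id τ).const_sub t |>.mul_const c |>.neg).exp
    simpa [mul_comm] using this
  rw [← intervalIntegral.integral_const_mul,
    intervalIntegral.integral_eq_sub_of_hasDerivAt (fun τ _ => hderiv τ)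
      ((by fun_prop : Continuous _).intervalIntegrable _ _)]
  simp

section Fourier

variable {V : Type*} [NormedAddCommGroup V] [InnerProductSpace ℝ V] [MeasurableSpace V]
  [BorelSpace V] [FiniteDimensional ℝ V]

theorem Real.continuous_fourier {E : Type*} [NormedAddCommGroup E] [NormedSpace ℂ E]
    (f : V → E) : Continuous (𝓕 f) := by
  by_cases hf : Integrable f
  · exact VectorFourier.fourierIntegral_continuous Real.continuous_fourierChar
      continuous_inner hf
  · have : 𝓕 f = 0 := funext fun w =>
      integral_undef ((Real.fourierIntegral_convergent_iff w).not.2 hf)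
    exact this ▸ continuous_const

theorem Real.norm_fourier_ofReal_mul_le {f g : V → ℝ} (hf : MemLp f 2) (hg : MemLp g 2)
    (w : V) :
    ‖𝓕 (fun v => (f v : ℂ) * g v) w‖ ≤ √(∫ v, f v ^ 2) * √(∫ v, g v ^ 2) :=
  calc ‖𝓕 (fun v => (f v : ℂ) * g v) w‖ ≤ ∫ v, ‖(f v : ℂ) * g v‖ :=
        VectorFourier.norm_fourierIntegral_le_integral_norm _ _ _ _ _
    _ = ∫ v, |f v| * |g v| := by simp only [norm_mul, Complex.norm_real, Real.norm_eq_abs]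
    _ ≤ √(∫ v, f v ^ 2) * √(∫ v, g v ^ 2) := integral_abs_mul_le_sqrt_mul_sqrt hf hg

end Fourier

theorem continuous_ftv (g : EuclideanSpace ℝ (Fin 3) → EuclideanSpace ℝ (Fin 3)) :
    Continuous (ftv g) :=
  (PiLp.continuous_toLp 2 _).comp (continuous_pi fun _ => Real.continuous_fourier _)

theorem norm_toLp_sum_I_mul_le {ι : Type*} [Fintype ι] (ξ : EuclideanSpace ℝ ι)
    {a : ι → ℝ} (ha : ∀ j, 0 ≤ a j) {c : ι → ι → ℂ} (hc : ∀ j k, ‖c j k‖ ≤ a j * a k) :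
    ‖WithLp.toLp 2 (fun k => ∑ j, Complex.I * (ξ j : ℂ) * c j k)‖ ≤ ‖ξ‖ * ∑ j, a j ^ 2 := by
  set s := ∑ j, |ξ j| * a j
  have hs : 0 ≤ s := Finset.sum_nonneg fun j _ => mul_nonneg (abs_nonneg _) (ha j)
  have hξ : s ≤ ‖ξ‖ * √(∑ j, a j ^ 2) := by
    refine (Real.sum_mul_le_sqrt_mul_sqrt _ _ _).trans_eq ?_
    simp [EuclideanSpace.norm_eq]
  have hcomp : ∀ k, ‖∑ j, Complex.I * (ξ j : ℂ) * c j k‖ ≤ s * a k := by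
    intro k
    refine (norm_sum_le _ _).trans ?_
    rw [Finset.sum_mul]
    gcongr with j
    simp only [norm_mul, Complex.norm_I, one_mul, Complex.norm_real, Real.norm_eq_abs]
    rw [mul_assoc]
    gcongr
    exact hc j k
  calc ‖WithLp.toLp 2 (fun k => ∑ j, Complex.I * (ξ j : ℂ) * c j k)‖
      ≤ √(∑ k, (s * a k) ^ 2) := by
        rw [EuclideanSpace.norm_eq]
        gcongr with k
        exact hcomp k
    _ = s * √(∑ k, a k ^ 2) := by
        simp only [mul_pow, ← Finset.mul_sum, Real.sqrt_mul (sq_nonneg s), Real.sqrt_sq hs]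
    _ ≤ ‖ξ‖ * √(∑ j, a j ^ 2) * √(∑ k, a k ^ 2) := by gcongr
    _ = ‖ξ‖ * ∑ j, a j ^ 2 := by rw [mul_assoc, Real.mul_self_sqrt (by positivity)]

theorem norm_nonlinNS_le (u : ℝ → EuclideanSpace ℝ (Fin 3) → EuclideanSpace ℝ (Fin 3))
    (τ : ℝ) (ξ : EuclideanSpace ℝ (Fin 3)) (hu : MemLp (u τ) 2) :
    ‖WithLp.toLp 2 (nonlinNS u τ ξ)‖ ≤ ‖ξ‖ * ∫ x, ‖u τ x‖ ^ 2 := by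
  have hcomp : ∀ j, MemLp (fun x => u τ x j) 2 := fun j => hu.eval_piLp j
  have hsum : ∑ j, √(∫ x, u τ x j ^ 2) ^ 2 = ∫ x, ‖u τ x‖ ^ 2 := by
    simp only [EuclideanSpace.real_norm_sq_eq]
    rw [integral_finsetSum _ fun j _ => (hcomp j).integrable_sq]
    exact Finset.sum_congr rfl fun j _ => Real.sq_sqrt (integral_nonneg fun _ => sq_nonneg _)
  rw [← hsum]
  exact norm_toLp_sum_I_mul_le ξ (fun _ => Real.sqrt_nonneg _)
    fun j k => Real.norm_fourier_ofReal_mul_le (hcomp j) (hcomp k) ξ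

theorem norm_sub_inner_div_smul_le {𝕜 E : Type*} [RCLike 𝕜] [NormedAddCommGroup E]
    [InnerProductSpace 𝕜 E] (v w : E) :
    ‖w - (inner 𝕜 v w / ((‖v‖ ^ 2 : ℝ) : 𝕜)) • v‖ ≤ ‖w‖ := by
  rw [← Submodule.starProjection_singleton, ← Submodule.starProjection_orthogonal_val]
  exact Submodule.norm_starProjection_apply_le _ w

theorem norm_lerayM_le (ξ : EuclideanSpace ℝ (Fin 3)) (w : Fin 3 → ℂ) :
    ‖WithLp.toLp 2 (lerayM ξ w)‖ ≤ ‖WithLp.toLp 2 w‖ := by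
  let Ξ : EuclideanSpace ℂ (Fin 3) := WithLp.toLp 2 fun i => (ξ i : ℂ)
  have hΞ : ‖Ξ‖ = ‖ξ‖ := by simp [Ξ, EuclideanSpace.norm_eq, Complex.norm_real]
  have hproj : WithLp.toLp 2 (lerayM ξ w)
      = WithLp.toLp 2 w - (inner ℂ Ξ (WithLp.toLp 2 w) / ((‖Ξ‖ ^ 2 : ℝ) : ℂ)) • Ξ := by
    ext i
    simp [lerayM, Ξ, hΞ, PiLp.inner_apply, mul_comm, mul_div_assoc]
  exact hproj ▸ norm_sub_inner_div_smul_le Ξ _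

theorem mul_norm_duhamel_le {ι : Type*} [Fintype ι] {t r C : ℝ} (ht : 0 ≤ t) (hr : 0 ≤ r)
    (hC : 0 ≤ C) (ℓ : ℝ → ι → ℂ) (hℓ : ∀ τ ∈ Ioc 0 t, ‖WithLp.toLp 2 (ℓ τ)‖ ≤ r * C) :
    r * ‖WithLp.toLp 2 (fun i =>
      ∫ τ in (0:ℝ)..t, Complex.exp (-(((t - τ) * r ^ 2 : ℝ) : ℂ)) * ℓ τ i)‖ ≤ C := by
  have hbound : ‖WithLp.toLp 2 (fun i =>
      ∫ τ in (0:ℝ)..t, Complex.exp (-(((t - τ) * r ^ 2 : ℝ) : ℂ)) * ℓ τ i)‖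
      ≤ ∫ τ in (0:ℝ)..t, rexp (-((t - τ) * r ^ 2)) * (r * C) := by
    simp only [intervalIntegral.integral_of_le ht]
    refine norm_toLp_integral_le (by fun_prop : Continuous _).integrableOn_Ioc
      ((ae_restrict_iff' measurableSet_Ioc).2 (.of_forall fun τ hτ => ?_))
    calc ‖WithLp.toLp 2 (fun i => Complex.exp (-(((t - τ) * r ^ 2 : ℝ) : ℂ)) * ℓ τ i)‖
        = ‖Complex.exp (-(((t - τ) * r ^ 2 : ℝ) : ℂ))‖ * ‖WithLp.toLp 2 (ℓ τ)‖ := by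
          rw [← norm_smul, ← WithLp.toLp_smul]; rfl
      _ ≤ rexp (-((t - τ) * r ^ 2)) * (r * C) := by
          rw [← Complex.ofReal_neg, Complex.norm_exp_ofReal]
          gcongr
          exact hℓ τ hτ
  calc r * ‖WithLp.toLp 2 (fun i =>
        ∫ τ in (0:ℝ)..t, Complex.exp (-(((t - τ) * r ^ 2 : ℝ) : ℂ)) * ℓ τ i)‖
      ≤ r * ∫ τ in (0:ℝ)..t, rexp (-((t - τ) * r ^ 2)) * (r * C) := by gcongr
    _ = C * (r ^ 2 * ∫ τ in (0:ℝ)..t, rexp (-((t - τ) * r ^ 2))) := by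
        rw [intervalIntegral.integral_mul_const]; ring
    _ = C * (1 - rexp (-(t * r ^ 2))) := by rw [mul_integral_exp_neg_sub_mul]
    _ ≤ C := mul_le_of_le_one_right hC (by linarith [exp_pos (-(t * r ^ 2))])

theorem Y1_propagation_NSE_general
    (u₀ : EuclideanSpace ℝ (Fin 3) → EuclideanSpace ℝ (Fin 3))
    (u : ℝ → EuclideanSpace ℝ (Fin 3) → EuclideanSpace ℝ (Fin 3))
    (hL2 : ∀ t, 0 ≤ t → MemLp (u t) 2 volume)
    (M : ℝ) (hM : ∀ ξ : EuclideanSpace ℝ (Fin 3), ‖ξ‖ * ‖ftv u₀ ξ‖ ≤ M)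
    (henergy : ∀ τ, 0 ≤ τ →
      (∫ x : EuclideanSpace ℝ (Fin 3), ‖u τ x‖ ^ 2)
        ≤ ∫ x : EuclideanSpace ℝ (Fin 3), ‖u₀ x‖ ^ 2)
    (hduhamel : ∀ t : ℝ, 0 ≤ t → ∀ᵐ ξ : EuclideanSpace ℝ (Fin 3), ∀ i : Fin 3,
      ftv (u t) ξ i
        = Complex.exp (-((t * ‖ξ‖ ^ 2 : ℝ) : ℂ)) * ftv u₀ ξ i
          - ∫ τ in (0:ℝ)..t, Complex.exp (-(((t - τ) * ‖ξ‖ ^ 2 : ℝ) : ℂ))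
              * lerayM ξ (nonlinNS u τ ξ) i) :
    ∀ t, 0 ≤ t → ∀ ξ : EuclideanSpace ℝ (Fin 3),
      ‖ξ‖ * ‖ftv (u t) ξ‖ ≤ M + ∫ x : EuclideanSpace ℝ (Fin 3), ‖u₀ x‖ ^ 2 := by
  intro t ht
  set E := ∫ x, ‖u₀ x‖ ^ 2
  refine le_of_ae_le_of_continuous (μ := volume)
    (continuous_norm.mul (continuous_ftv _).norm) continuous_const ?_
  have hE : 0 ≤ E := integral_nonneg fun _ => sq_nonneg _
  filter_upwards [hduhamel t ht] with ξ hξ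
  set heat := Complex.exp (-((t * ‖ξ‖ ^ 2 : ℝ) : ℂ)) • ftv u₀ ξ
  set duhamel : EuclideanSpace ℂ (Fin 3) := WithLp.toLp 2 fun i =>
    ∫ τ in (0:ℝ)..t, Complex.exp (-(((t - τ) * ‖ξ‖ ^ 2 : ℝ) : ℂ)) * lerayM ξ (nonlinNS u τ ξ) i
  have hsplit : ftv (u t) ξ = heat - duhamel := by
    ext i
    simp [heat, duhamel, hξ i]
  have hheat : ‖ξ‖ * ‖heat‖ ≤ M := by
    refine le_trans ?_ (hM ξ)
    rw [norm_smul, ← Complex.ofReal_neg, Complex.norm_exp_ofReal, mul_left_comm]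
    refine mul_le_of_le_one_left (by positivity) (exp_le_one_iff.2 ?_)
    nlinarith [sq_nonneg ‖ξ‖]
  have hforce : ∀ τ ∈ Ioc 0 t, ‖WithLp.toLp 2 (lerayM ξ (nonlinNS u τ ξ))‖ ≤ ‖ξ‖ * E :=
    fun τ hτ => (norm_lerayM_le ξ _).trans <| (norm_nonlinNS_le u τ ξ (hL2 τ hτ.1.le)).trans <|
      mul_le_mul_of_nonneg_left (henergy τ hτ.1.le) (norm_nonneg ξ)
  calc ‖ξ‖ * ‖ftv (u t) ξ‖ ≤ ‖ξ‖ * ‖heat‖ + ‖ξ‖ * ‖duhamel‖ := by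
        rw [hsplit, ← mul_add]
        exact mul_le_mul_of_nonneg_left (norm_sub_le _ _) (norm_nonneg ξ)
    _ ≤ M + E := add_le_add hheat (mul_norm_duhamel_le ht (norm_nonneg ξ) hE _ hforce)

/-- propagation of the `𝒴¹` bound for mild Navier–Stokes
solutions. Let `u₀ ∈ L²(ℝ³;ℝ³)` with `‖u₀‖_{𝒴¹} = sup_ξ |ξ| |û₀(ξ)| < ∞`
(encoded by an arbitrary upper bound `M`), and let `u : [0,∞) → L²(ℝ³;ℝ³)`
satisfy `‖u(τ)‖_{L²} ≤ ‖u₀‖_{L²}` for all `τ ≥ 0` and the Duhamel identity in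
Fourier variables. Then `sup_{t ≥ 0} ‖u(t)‖_{𝒴¹} ≤ ‖u₀‖_{𝒴¹} + ‖u₀‖²_{L²}`. -/
theorem Y1_propagation_NSE
    (u₀ : EuclideanSpace ℝ (Fin 3) → EuclideanSpace ℝ (Fin 3))
    (u : ℝ → EuclideanSpace ℝ (Fin 3) → EuclideanSpace ℝ (Fin 3))
    (hL2₀ : MemLp u₀ 2 volume)
    (hL2 : ∀ t, 0 ≤ t → MemLp (u t) 2 volume)
    (M : ℝ) (hM : ∀ ξ : EuclideanSpace ℝ (Fin 3), ‖ξ‖ * ‖ftv u₀ ξ‖ ≤ M)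
    (henergy : ∀ τ, 0 ≤ τ →
      (∫ x : EuclideanSpace ℝ (Fin 3), ‖u τ x‖ ^ 2)
        ≤ ∫ x : EuclideanSpace ℝ (Fin 3), ‖u₀ x‖ ^ 2)
    (hduhamel : ∀ t : ℝ, 0 ≤ t → ∀ᵐ ξ : EuclideanSpace ℝ (Fin 3), ∀ i : Fin 3,
      ftv (u t) ξ i
        = Complex.exp (-((t * ‖ξ‖ ^ 2 : ℝ) : ℂ)) * ftv u₀ ξ i
          - ∫ τ in (0:ℝ)..t, Complex.exp (-(((t - τ) * ‖ξ‖ ^ 2 : ℝ) : ℂ))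
              * lerayM ξ (nonlinNS u τ ξ) i) :
    ∀ t, 0 ≤ t → ∀ ξ : EuclideanSpace ℝ (Fin 3),
      ‖ξ‖ * ‖ftv (u t) ξ‖ ≤ M + ∫ x : EuclideanSpace ℝ (Fin 3), ‖u₀ x‖ ^ 2 :=
  Y1_propagation_NSE_general u₀ u hL2 M hM henergy hduhamel
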